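/- arXiv:1910.14071 — 2 statements merged into one kernel-verified Lean document; each statement's English description precedes it below -/
import Mathlib

section
/- Let 1 < γ ≤ 2 and let g : [0, π/2] → ℝ be continuously differentiable with g(0) = 0. Then sup_{θ ∈ [0,π/2]} |g(θ)|² ≤ (C/(γ-1)) ∫_0^{π/2} |g'(θ)|² sin(2θ)^{2-γ} dθ for an absolute constant C. -/
/-!
Write `g θ = ∫₀^θ g'` and apply Cauchy–Schwarz against the weight `sin (2t) ^ (2 - γ)`:
`g θ ² ≤ (∫ g'² sin (2t) ^ (2 - γ)) · ∫₀^{π/2} sin (2t) ^ (γ - 2)`. Jordan's inequality gives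
`sin (2t) ≥ min t (π/2 - t)`, so the last integral is at most `2 ∫₀^{π/2} t ^ (γ - 2) dt ≤ π / (γ - 1)`.
-/

open Real MeasureTheory Set

lemma two_mul_mul_le_sq_mul_add_inv {w : ℝ} (hw : 0 < w) (ε d : ℝ) :
    2 * ε * d ≤ ε ^ 2 * (d ^ 2 * w) + w⁻¹ := by
  have hsq : ε ^ 2 * (d ^ 2 * w) + w⁻¹ - 2 * ε * d = (ε * d * w - 1) ^ 2 / w := by
    field_simp
    ring
  linarith [div_nonneg (sq_nonneg (ε * d * w - 1)) hw.le]

/-- Integrating `2 ε f ≤ ε² f² w + w⁻¹` gives a quadratic in `ε` that is nonnegative everywhere,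
so its discriminant is nonpositive. -/
theorem intervalIntegral.sq_integral_le_integral_sq_mul_mul_integral {f w M : ℝ → ℝ} {a b : ℝ}
    (hab : a ≤ b) (hw : ∀ t ∈ Ioo a b, 0 < w t) (hM : ∀ t ∈ Ioo a b, (w t)⁻¹ ≤ M t)
    (hf : IntervalIntegrable f volume a b)
    (hfw : IntervalIntegrable (fun t => f t ^ 2 * w t) volume a b)
    (hMi : IntervalIntegrable M volume a b) :
    (∫ t in a..b, f t) ^ 2 ≤ (∫ t in a..b, f t ^ 2 * w t) * ∫ t in a..b, M t := by
  have hquad : ∀ ε : ℝ, 0 ≤ (∫ t in a..b, f t ^ 2 * w t) * (ε * ε)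
      + (-2 * ∫ t in a..b, f t) * ε + ∫ t in a..b, M t := by
    intro ε
    have h := intervalIntegral.integral_mono_on_of_le_Ioo hab (hf.const_mul (2 * ε))
      ((hfw.const_mul (ε ^ 2)).add hMi) fun t ht =>
        (two_mul_mul_le_sq_mul_add_inv (hw t ht) ε (f t)).trans (by linarith [hM t ht])
    rw [intervalIntegral.integral_const_mul, intervalIntegral.integral_add (hfw.const_mul _) hMi,
      intervalIntegral.integral_const_mul] at h
    nlinarith
  have h := discrim_le_zero hquad
  rw [discrim] at h
  nlinarith

theorem intervalIntegral.integral_mono_right_of_nonneg {f : ℝ → ℝ} {a b c : ℝ}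
    (hab : a ≤ b) (hbc : b ≤ c) (hf : ∀ t ∈ Icc a c, 0 ≤ f t)
    (hfi : IntervalIntegrable f volume a c) :
    ∫ t in a..b, f t ≤ ∫ t in a..c, f t :=
  intervalIntegral.integral_mono_interval le_rfl hab hbc
    ((ae_restrict_mem measurableSet_Ioc).mono fun t ht => hf t (Ioc_subset_Icc_self ht)) hfi

lemma min_le_sin_two_mul {t : ℝ} (h0 : 0 ≤ t) (h1 : t ≤ π / 2) :
    min t (π / 2 - t) ≤ sin (2 * t) := by
  have jordan : ∀ u, 0 ≤ u → u ≤ π / 4 → u ≤ sin (2 * u) := fun u hu0 hu1 => by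
    refine le_trans ?_ (mul_le_sin (by linarith) (by linarith))
    rw [div_mul_eq_mul_div, le_div_iff₀ pi_pos]
    nlinarith [pi_le_four]
  rcases le_total t (π / 4) with h | h
  · exact (min_le_left _ _).trans (jordan t h0 h)
  · rw [← sin_pi_sub, show π - 2 * t = 2 * (π / 2 - t) by ring]
    exact (min_le_right _ _).trans (jordan _ (by linarith) (by linarith))

lemma inv_sin_two_mul_rpow_le {s t : ℝ} (hs : 0 ≤ s) (ht : t ∈ Ioo 0 (π / 2)) :
    (sin (2 * t) ^ s)⁻¹ ≤ t ^ (-s) + (π / 2 - t) ^ (-s) := by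
  obtain ⟨h0, h1⟩ := ht
  have hmin : 0 < min t (π / 2 - t) := lt_min h0 (by linarith)
  calc (sin (2 * t) ^ s)⁻¹ = sin (2 * t) ^ (-s) := (rpow_neg (hmin.le.trans
        (min_le_sin_two_mul h0.le h1.le)) s).symm
    _ ≤ min t (π / 2 - t) ^ (-s) :=
        rpow_le_rpow_of_nonpos hmin (min_le_sin_two_mul h0.le h1.le) (by linarith)
    _ ≤ t ^ (-s) + (π / 2 - t) ^ (-s) := by
        rcases min_choice t (π / 2 - t) with h | h <;> rw [h]
        · linarith [rpow_nonneg (by linarith : 0 ≤ π / 2 - t) (-s)]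
        · linarith [rpow_nonneg h0.le (-s)]

lemma intervalIntegrable_rpow_add_rpow_sub {s : ℝ} (hs : -1 < s) (a : ℝ) :
    IntervalIntegrable (fun t => t ^ s + (a - t) ^ s) volume 0 a := by
  have hi : IntervalIntegrable (fun t : ℝ => t ^ s) volume 0 a :=
    intervalIntegral.intervalIntegrable_rpow' hs
  exact hi.add (by simpa using (hi.comp_sub_left a).symm)

lemma integral_rpow_add_rpow_sub {s : ℝ} (hs : -1 < s) (a : ℝ) :
    ∫ t in (0 : ℝ)..a, (t ^ s + (a - t) ^ s) = 2 * (a ^ (s + 1) / (s + 1)) := by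
  have hi : IntervalIntegrable (fun t : ℝ => t ^ s) volume 0 a :=
    intervalIntegral.intervalIntegrable_rpow' hs
  rw [intervalIntegral.integral_add hi (by simpa using (hi.comp_sub_left a).symm),
    intervalIntegral.integral_comp_sub_left (fun t => t ^ s), sub_zero, sub_self,
    integral_rpow (Or.inl hs), zero_rpow (by linarith)]
  ring

lemma integral_rpow_add_rpow_pi_div_two_sub_le {s : ℝ} (hs : -1 < s) (hs0 : s ≤ 0) :
    ∫ t in (0 : ℝ)..π / 2, (t ^ s + (π / 2 - t) ^ s) ≤ π / (s + 1) := by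
  have hpow : (π / 2) ^ (s + 1) ≤ π / 2 :=
    rpow_le_self_of_one_le (by linarith [pi_gt_three]) (by linarith)
  rw [integral_rpow_add_rpow_sub hs, ← mul_div_assoc]
  gcongr
  · linarith
  · linarith

theorem sq_integral_le_div_mul_integral_sin_two_mul_rpow {f : ℝ → ℝ} {s θ : ℝ} (hs0 : 0 ≤ s)
    (hs1 : s < 1) (hf : Continuous f) (hθ : θ ∈ Icc 0 (π / 2)) :
    (∫ t in (0 : ℝ)..θ, f t) ^ 2 ≤
      π / (1 - s) * ∫ t in (0 : ℝ)..π / 2, f t ^ 2 * sin (2 * t) ^ s := by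
  obtain ⟨hθ0, hθ1⟩ := hθ
  set M : ℝ → ℝ := fun t => t ^ (-s) + (π / 2 - t) ^ (-s)
  have hJnn : ∀ t ∈ Icc 0 (π / 2), 0 ≤ f t ^ 2 * sin (2 * t) ^ s := fun t ht =>
    mul_nonneg (sq_nonneg _) (rpow_nonneg
      (sin_nonneg_of_nonneg_of_le_pi (by linarith [ht.1]) (by linarith [ht.2])) _)
  have hMnn : ∀ t ∈ Icc 0 (π / 2), 0 ≤ M t := fun t ht =>
    add_nonneg (rpow_nonneg ht.1 _) (rpow_nonneg (by linarith [ht.2]) _)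
  have hJi : IntervalIntegrable (fun t => f t ^ 2 * sin (2 * t) ^ s) volume 0 (π / 2) :=
    ((hf.pow 2).mul ((continuous_sin.comp (continuous_const.mul continuous_id)).rpow_const
      fun _ => Or.inr hs0)).intervalIntegrable _ _
  have hMi : IntervalIntegrable M volume 0 (π / 2) :=
    intervalIntegrable_rpow_add_rpow_sub (by linarith) _
  have hsub : uIcc 0 θ ⊆ uIcc 0 (π / 2) := uIcc_subset_uIcc_left (mem_uIcc_of_le hθ0 hθ1)
  have hIoo : ∀ t ∈ Ioo 0 θ, t ∈ Ioo 0 (π / 2) := fun t ht => ⟨ht.1, ht.2.trans_le hθ1⟩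
  have hCS := intervalIntegral.sq_integral_le_integral_sq_mul_mul_integral hθ0
    (fun t ht => rpow_pos_of_pos (sin_pos_of_pos_of_lt_pi (by linarith [(hIoo t ht).1])
      (by linarith [(hIoo t ht).2])) _)
    (fun t ht => inv_sin_two_mul_rpow_le hs0 (hIoo t ht))
    (hf.intervalIntegrable 0 θ) (hJi.mono_set hsub) (hMi.mono_set hsub)
  have hM : ∫ t in (0 : ℝ)..θ, M t ≤ π / (1 - s) := by
    refine (intervalIntegral.integral_mono_right_of_nonneg hθ0 hθ1 hMnn hMi).trans ?_
    simpa [M, show -s + 1 = 1 - s by ring] using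
      integral_rpow_add_rpow_pi_div_two_sub_le (s := -s) (by linarith) (by linarith)
  rw [mul_comm]
  exact hCS.trans (mul_le_mul
    (intervalIntegral.integral_mono_right_of_nonneg hθ0 hθ1 hJnn hJi) hM
    (intervalIntegral.integral_nonneg hθ0 fun t ht => hMnn t ⟨ht.1, ht.2.trans hθ1⟩)
    (intervalIntegral.integral_nonneg (by positivity) hJnn))

theorem stmt_9 :
    ∃ C : ℝ, 0 < C ∧
      ∀ γ : ℝ, 1 < γ → γ ≤ 2 →
        ∀ g : ℝ → ℝ, ContDiff ℝ 1 g → g 0 = 0 →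
          ∀ θ ∈ Set.Icc (0:ℝ) (π/2),
            (g θ)^2 ≤ (C / (γ - 1)) *
              ∫ t in (0:ℝ)..(π/2), (deriv g t)^2 * Real.sin (2*t) ^ (2 - γ) := by
  refine ⟨π, pi_pos, fun γ hγ1 hγ2 g hg hg0 θ hθ => ?_⟩
  have hg' : Continuous (deriv g) := hg.continuous_deriv le_rfl
  have hftc : g θ = ∫ t in (0 : ℝ)..θ, deriv g t := by
    rw [intervalIntegral.integral_deriv_eq_sub
      (fun x _ => (hg.differentiable one_ne_zero).differentiableAt) (hg'.intervalIntegrable 0 θ),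
      hg0, sub_zero]
  have h := sq_integral_le_div_mul_integral_sin_two_mul_rpow (s := 2 - γ) (by linarith)
    (by linarith) hg' hθ
  rwa [show 1 - (2 - γ) = γ - 1 by ring, ← hftc] at h
end

section
/- Let f : (0,∞) × [0,π/2] → ℝ be smooth and suppose the angular profile Γ and constant c satisfy the normalization ∫_0^{π/2} 3 (Γ(θ)/c) sin(θ) cos²(θ) dθ = 1. Define L₁₂(f)(z) = ∫_z^∞ (1/r) ∫_0^{π/2} 3 f(r,θ) sin(θ) cos²(θ) dθ dr, L_{F*}(f)(z,θ) = f + z∂_z f - 2f/(1+z) - (2z Γ(θ)/(c(1+z)²)) L₁₂(f)(z), and L(g)(z) = g + z g' - 2g/(1+z) for g : (0,∞) → ℝ. Then, assuming all integrals converge and differentiation under the integral is justified, L₁₂(L_{F*}(f))(z) = L(L₁₂(f))(z) for all z > 0. -/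
open Real MeasureTheory Filter

/-- The averaging operator `L₁₂`. -/
noncomputable def L12 (f : ℝ → ℝ → ℝ) (z : ℝ) : ℝ :=
  ∫ r in Set.Ioi z, (1/r) * ∫ θ in (0:ℝ)..(π/2), 3 * f r θ * Real.sin θ * Real.cos θ ^ 2

/-- The one-dimensional operator `L(g) = g + z g' - 2g/(1+z)`. -/
noncomputable def Lop (g : ℝ → ℝ) (z : ℝ) : ℝ :=
  g z + z * deriv g z - 2 * g z / (1 + z)

/-- The linearized operator around the leading-order profile `F*`. -/
noncomputable def LFstar (Γ : ℝ → ℝ) (c : ℝ) (f : ℝ → ℝ → ℝ) (z θ : ℝ) : ℝ :=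
  f z θ + z * deriv (fun r => f r θ) z - 2 * f z θ / (1 + z)
    - (2 * z * Γ θ / (c * (1 + z)^2)) * L12 f z

theorem stmt_17 (f : ℝ → ℝ → ℝ) (hf : ContDiff ℝ (⊤ : ℕ∞) (Function.uncurry f))
    (Γ : ℝ → ℝ) (c : ℝ)
    (hnorm : ∫ θ in (0:ℝ)..(π/2), 3 * (Γ θ / c) * Real.sin θ * Real.cos θ ^ 2 = 1)
    (hconv1 : ∀ z : ℝ, 0 < z →
      IntegrableOn (fun r => (1/r) * ∫ θ in (0:ℝ)..(π/2),
        3 * f r θ * Real.sin θ * Real.cos θ ^ 2) (Set.Ioi z))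
    (hconv2 : ∀ z : ℝ, 0 < z →
      IntegrableOn (fun r => (1/r) * ∫ θ in (0:ℝ)..(π/2),
        3 * LFstar Γ c f r θ * Real.sin θ * Real.cos θ ^ 2) (Set.Ioi z))
    (hderiv : ∀ z : ℝ, 0 < z →
      HasDerivAt (L12 f)
        (-(1/z) * ∫ θ in (0:ℝ)..(π/2), 3 * f z θ * Real.sin θ * Real.cos θ ^ 2) z)
    (hvanish : Tendsto (fun r => ∫ θ in (0:ℝ)..(π/2),
        3 * f r θ * Real.sin θ * Real.cos θ ^ 2) atTop (nhds 0)) :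
    ∀ z : ℝ, 0 < z → L12 (LFstar Γ c f) z = Lop (L12 f) z := by
  have hfc : Continuous (Function.uncurry f) := hf.continuous
  have hc : c ≠ 0 := by
    intro h
    rw [h] at hnorm
    simp at hnorm
  -- the partial derivative in the first variable
  set g : ℝ → ℝ → ℝ := fun x θ => fderiv ℝ (Function.uncurry f) (x, θ) (1, 0) with hg_def
  have hgderiv : ∀ x θ : ℝ, HasDerivAt (fun r => f r θ) (g x θ) x := by
    intro x θ
    have h1 : HasFDerivAt (Function.uncurry f) (fderiv ℝ (Function.uncurry f) (x, θ)) (x, θ) :=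
      (hf.differentiable (by simp) (x, θ)).hasFDerivAt
    have h2 : HasDerivAt (fun r : ℝ => (r, θ)) ((1 : ℝ), (0 : ℝ)) x :=
      HasDerivAt.prodMk (hasDerivAt_id x) (hasDerivAt_const x θ)
    exact h1.comp_hasDerivAt x h2
  have hgcont : Continuous (fun p : ℝ × ℝ => g p.1 p.2) := by
    have hA : Continuous fun q : (ℝ × ℝ →L[ℝ] ℝ) × (ℝ × ℝ) => q.1 q.2 :=
      isBoundedBilinearMap_apply.continuous
    have hB : Continuous fun p : ℝ × ℝ => (fderiv ℝ (Function.uncurry f) p, ((1 : ℝ), (0 : ℝ))) :=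
      (hf.continuous_fderiv (by simp)).prodMk continuous_const
    exact hA.comp hB
  set A : ℝ → ℝ := fun r => ∫ θ in (0:ℝ)..(π/2), 3 * f r θ * Real.sin θ * Real.cos θ ^ 2
    with hA_def
  set B : ℝ → ℝ := fun r => ∫ θ in (0:ℝ)..(π/2), 3 * g r θ * Real.sin θ * Real.cos θ ^ 2
    with hB_def
  set G : ℝ → ℝ := L12 f with hG_def
  -- differentiation under the integral sign
  have hA' : ∀ x₀ : ℝ, HasDerivAt A (B x₀) x₀ := by
    intro x₀
    obtain ⟨C, hC⟩ : ∃ C : ℝ, ∀ x ∈ Metric.closedBall x₀ 1, ∀ θ ∈ Set.uIcc (0:ℝ) (π/2),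
        ‖3 * g x θ * Real.sin θ * Real.cos θ ^ 2‖ ≤ C := by
      have hK : IsCompact ((Metric.closedBall x₀ 1) ×ˢ (Set.uIcc (0:ℝ) (π/2))) :=
        (isCompact_closedBall _ _).prod isCompact_uIcc
      have hcont : ContinuousOn
          (fun p : ℝ × ℝ => ‖3 * g p.1 p.2 * Real.sin p.2 * Real.cos p.2 ^ 2‖)
          ((Metric.closedBall x₀ 1) ×ˢ (Set.uIcc (0:ℝ) (π/2))) := by
        apply Continuous.continuousOn
        exact (((continuous_const.mul hgcont).mul
          (Real.continuous_sin.comp continuous_snd)).mul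
          ((Real.continuous_cos.comp continuous_snd).pow 2)).norm
      have hne : ((Metric.closedBall x₀ 1) ×ˢ (Set.uIcc (0:ℝ) (π/2))).Nonempty :=
        ⟨(x₀, 0), by simp [Set.mem_prod, Set.left_mem_uIcc]⟩
      obtain ⟨p, _, hmax⟩ := hK.exists_isMaxOn hne hcont
      exact ⟨_, fun x hx θ hθ => (isMaxOn_iff.mp hmax) (x, θ) ⟨hx, hθ⟩⟩
    have key := intervalIntegral.hasDerivAt_integral_of_dominated_loc_of_deriv_le
      (F := fun x θ => 3 * f x θ * Real.sin θ * Real.cos θ ^ 2)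
      (F' := fun x θ => 3 * g x θ * Real.sin θ * Real.cos θ ^ 2)
      (x₀ := x₀) (bound := fun _ => C) (a := (0:ℝ)) (b := π/2) (μ := volume)
      (Metric.ball_mem_nhds x₀ one_pos) ?_ ?_ ?_ ?_ ?_ ?_
    · exact key.2
    · refine Filter.Eventually.of_forall fun x => ?_
      apply Continuous.aestronglyMeasurable
      exact ((continuous_const.mul (hfc.comp (continuous_const.prodMk continuous_id))).mul
        Real.continuous_sin).mul (Real.continuous_cos.pow 2)
    · apply Continuous.intervalIntegrable
      exact ((continuous_const.mul (hfc.comp (continuous_const.prodMk continuous_id))).mul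
        Real.continuous_sin).mul (Real.continuous_cos.pow 2)
    · apply Continuous.aestronglyMeasurable
      exact ((continuous_const.mul (hgcont.comp (continuous_const.prodMk continuous_id))).mul
        Real.continuous_sin).mul (Real.continuous_cos.pow 2)
    · refine Filter.Eventually.of_forall fun θ hθ x hx => ?_
      exact hC x (Metric.ball_subset_closedBall hx) θ (Set.uIoc_subset_uIcc hθ)
    · exact intervalIntegrable_const
    · refine Filter.Eventually.of_forall fun θ _ x _ => ?_
      exact (((hgderiv x θ).const_mul 3).mul_const (Real.sin θ)).mul_const (Real.cos θ ^ 2)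
  -- interval integrability of the Γ term
  have hΓint : IntervalIntegrable (fun θ => 3 * (Γ θ / c) * Real.sin θ * Real.cos θ ^ 2)
      volume 0 (π/2) := by
    by_contra h
    rw [intervalIntegral.integral_undef h] at hnorm
    exact one_ne_zero hnorm.symm
  -- the inner angular integral of `LFstar`
  have hinner : ∀ r : ℝ, 0 < r →
      (∫ θ in (0:ℝ)..(π/2), 3 * LFstar Γ c f r θ * Real.sin θ * Real.cos θ ^ 2)
        = A r + r * B r - 2 * A r / (1 + r) - (2 * r / (1 + r) ^ 2) * G r := by
    intro r hr
    have hfint : IntervalIntegrable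
        (fun θ => (1 - 2 / (1 + r)) * (3 * f r θ * Real.sin θ * Real.cos θ ^ 2))
        volume 0 (π/2) := by
      apply Continuous.intervalIntegrable
      exact continuous_const.mul (((continuous_const.mul
        (hfc.comp (continuous_const.prodMk continuous_id))).mul
        Real.continuous_sin).mul (Real.continuous_cos.pow 2))
    have hgint : IntervalIntegrable
        (fun θ => r * (3 * g r θ * Real.sin θ * Real.cos θ ^ 2)) volume 0 (π/2) := by
      apply Continuous.intervalIntegrable
      exact continuous_const.mul (((continuous_const.mul
        (hgcont.comp (continuous_const.prodMk continuous_id))).mul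
        Real.continuous_sin).mul (Real.continuous_cos.pow 2))
    have hΓint' : IntervalIntegrable
        (fun θ => (-(2 * r * G r / (1 + r) ^ 2)) *
          (3 * (Γ θ / c) * Real.sin θ * Real.cos θ ^ 2)) volume 0 (π/2) :=
      hΓint.const_mul _
    have heq : ∀ θ : ℝ, 3 * LFstar Γ c f r θ * Real.sin θ * Real.cos θ ^ 2
        = (1 - 2 / (1 + r)) * (3 * f r θ * Real.sin θ * Real.cos θ ^ 2)
          + r * (3 * g r θ * Real.sin θ * Real.cos θ ^ 2)
          + (-(2 * r * G r / (1 + r) ^ 2)) * (3 * (Γ θ / c) * Real.sin θ * Real.cos θ ^ 2) := by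
      intro θ
      have hd : deriv (fun x => f x θ) r = g r θ := (hgderiv r θ).deriv
      simp only [LFstar, hd, ← hG_def]
      field_simp [hc]
      ring
    rw [intervalIntegral.integral_congr (fun θ _ => heq θ)]
    rw [intervalIntegral.integral_add (hfint.add hgint) hΓint',
      intervalIntegral.integral_add hfint hgint,
      intervalIntegral.integral_const_mul, intervalIntegral.integral_const_mul,
      intervalIntegral.integral_const_mul, hnorm]
    ring
  intro z hz
  have hz0 : z ≠ 0 := ne_of_gt hz
  -- G tends to 0 at infinity
  have hGtend : Tendsto G atTop (nhds 0) := by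
    have hIoi := intervalIntegral_tendsto_integral_Ioi z (hconv1 z hz) tendsto_id
    have hsplit : ∀ r : ℝ, z < r → G r =
        (∫ x in Set.Ioi z, (1/x) * A x) - ∫ x in z..r, (1/x) * A x := by
      intro r hr
      have hu : Set.Ioc z r ∪ Set.Ioi r = Set.Ioi z := Set.Ioc_union_Ioi_eq_Ioi hr.le
      have hint1 : IntegrableOn (fun x => (1/x) * A x) (Set.Ioc z r) :=
        (hconv1 z hz).mono_set (by rw [← hu]; exact Set.subset_union_left)
      have hint2 : IntegrableOn (fun x => (1/x) * A x) (Set.Ioi r) :=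
        (hconv1 z hz).mono_set (by rw [← hu]; exact Set.subset_union_right)
      have := MeasureTheory.setIntegral_union (Set.Ioc_disjoint_Ioi le_rfl)
        measurableSet_Ioi hint1 hint2 (f := fun x => (1/x) * A x) (μ := volume)
      rw [hu] at this
      rw [intervalIntegral.integral_of_le hr.le]
      have hGr : G r = ∫ x in Set.Ioi r, (1/x) * A x := rfl
      rw [hGr, this]; ring
    have htend : Tendsto (fun r => (∫ x in Set.Ioi z, (1/x) * A x) - ∫ x in z..r, (1/x) * A x)
        atTop (nhds 0) := by
      have := (tendsto_const_nhds (x := ∫ x in Set.Ioi z, (1/x) * A x)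
        (f := atTop (α := ℝ))).sub hIoi
      simpa [hA_def] using this
    exact htend.congr' (by filter_upwards [eventually_gt_atTop z] with r hr
      using (hsplit r hr).symm)
  -- the auxiliary function φ and its derivative
  set φ : ℝ → ℝ := fun r => A r + 2 * G r / (1 + r) with hφ_def
  set φ' : ℝ → ℝ := fun r => B r - 2 * A r / (r * (1 + r)) - 2 * G r / (1 + r) ^ 2 with hφ'_def
  have hφderiv : ∀ r : ℝ, 0 < r → HasDerivAt φ (φ' r) r := by
    intro r hr
    have hr0 : r ≠ 0 := ne_of_gt hr
    have h1r : (1 : ℝ) + r ≠ 0 := by positivity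
    have hGr : HasDerivAt G (-(1/r) * A r) r := hderiv r hr
    have hden : HasDerivAt (fun y : ℝ => 1 + y) 1 r := (hasDerivAt_id r).const_add 1
    have h2 : HasDerivAt (fun y => 2 * G y / (1 + y))
        ((2 * (-(1/r) * A r) * (1 + r) - 2 * G r * 1) / (1 + r) ^ 2) r :=
      (hGr.const_mul 2).div hden h1r
    have := (hA' r).add h2
    refine this.congr_deriv ?_
    rw [hφ'_def]
    field_simp
    ring
  have hφcont : ContinuousWithinAt φ (Set.Ici z) z :=
    (hφderiv z hz).continuousAt.continuousWithinAt
  have hφtend : Tendsto φ atTop (nhds 0) := by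
    have h1 : Tendsto (fun r : ℝ => 2 * G r) atTop (nhds 0) := by
      simpa using hGtend.const_mul 2
    have h2 : Tendsto (fun r : ℝ => (1 + r)⁻¹) atTop (nhds 0) := by
      apply tendsto_inv_atTop_zero.comp
      exact tendsto_atTop_add_const_left atTop 1 tendsto_id
    have h3 : Tendsto (fun r : ℝ => 2 * G r / (1 + r)) atTop (nhds 0) := by
      have := h1.mul h2
      simpa [div_eq_mul_inv] using this
    have := hvanish.add h3
    simpa using this
  -- integrability of φ'
  have hφ'eq : ∀ r ∈ Set.Ioi z,
      (fun r => (1/r) * ∫ θ in (0:ℝ)..(π/2),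
        3 * LFstar Γ c f r θ * Real.sin θ * Real.cos θ ^ 2) r
      = (fun r => (1/r) * A r) r + φ' r := by
    intro r hr
    have hr' : 0 < r := lt_trans hz hr
    have hr0 : r ≠ 0 := ne_of_gt hr'
    have h1r : (1 : ℝ) + r ≠ 0 := by positivity
    simp only [hinner r hr', hφ'_def]
    field_simp
    ring
  have hφ'int : IntegrableOn φ' (Set.Ioi z) := by
    have hsub : IntegrableOn ((fun r => (1/r) * ∫ θ in (0:ℝ)..(π/2),
        3 * LFstar Γ c f r θ * Real.sin θ * Real.cos θ ^ 2)
        - fun r => (1/r) * ∫ θ in (0:ℝ)..(π/2),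
        3 * f r θ * Real.sin θ * Real.cos θ ^ 2) (Set.Ioi z) :=
      (hconv2 z hz).sub (hconv1 z hz)
    refine hsub.congr_fun (fun r hr => ?_) measurableSet_Ioi
    have := hφ'eq r hr
    simp only [← hA_def] at this ⊢
    simp only [Pi.sub_apply]
    linarith [this]
  -- FTC on (z, ∞)
  have hFTC : ∫ r in Set.Ioi z, φ' r = 0 - φ z :=
    integral_Ioi_of_hasDerivAt_of_tendsto hφcont
      (fun r hr => hφderiv r (lt_trans hz hr)) hφ'int hφtend
  -- put everything together
  have hL12 : L12 (LFstar Γ c f) z = ∫ r in Set.Ioi z,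
      ((1/r) * A r + φ' r) := by
    rw [L12]
    exact MeasureTheory.setIntegral_congr_fun measurableSet_Ioi fun r hr => hφ'eq r hr
  rw [hL12, MeasureTheory.integral_add (hconv1 z hz) hφ'int]
  have hG1 : ∫ r in Set.Ioi z, (1/r) * A r = G z := rfl
  rw [hG1, hFTC]
  have hLop : Lop (L12 f) z = G z + z * (-(1/z) * A z) - 2 * G z / (1 + z) := by
    rw [Lop, (hderiv z hz).deriv]
  rw [hLop, hφ_def]
  field_simp
  ring
end
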